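/- (Sum rule for the ∨-derivative) For differentiable real functions f, g with positive derivatives, D(f + g) = (f + Dg) ∨ (Df + g), where Df(x) := f(x) + log(f'(x)) − x. Concretely: if f' x > 0 and g' x > 0 then (f x + g x) + log(f' x + g' x) − x = ((f x + (g x + log (g' x) − x)) ∨ ((f x + log (f' x) − x) + g x)). -/
import Mathlib

noncomputable def join (x y : ℝ) : ℝ := Real.log (Real.exp x + Real.exp y)
theorem vee_deriv_sum_rule (f g : ℝ → ℝ) (x : ℝ)
    (hf : 0 < deriv f x) (hg : 0 < deriv g x) :
    (f x + g x) + Real.log (deriv f x + deriv g x) - x =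
      join (f x + (g x + Real.log (deriv g x) - x))
           ((f x + Real.log (deriv f x) - x) + g x) := by
  unfold join
  have h1 : Real.exp (f x + (g x + Real.log (deriv g x) - x)) =
      Real.exp (f x + g x - x) * deriv g x := by
    rw [show f x + (g x + Real.log (deriv g x) - x) =
      (f x + g x - x) + Real.log (deriv g x) by ring, Real.exp_add, Real.exp_log hg]
  have h2 : Real.exp ((f x + Real.log (deriv f x) - x) + g x) =
      Real.exp (f x + g x - x) * deriv f x := by
    rw [show (f x + Real.log (deriv f x) - x) + g x =
      (f x + g x - x) + Real.log (deriv f x) by ring, Real.exp_add, Real.exp_log hf]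
  rw [h1, h2, ← mul_add, Real.log_mul (Real.exp_ne_zero _) (by positivity),
    Real.log_exp]
  ring
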